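/- arXiv:2008.11118 — 2 statements merged into one kernel-verified Lean document; each statement's English description precedes it below -/
import Mathlib

section
/- For every ideal J of A, the group G acts on the quotient ring B/(J·B) by ring automorphisms (induced from the action on B), and the canonical ring homomorphism A/J → (B/(J·B))^G into the invariant subring of the quotient is bijective. -/
/-!
The Reynolds operator `ρ b = |G|⁻¹ • ∑ g • b` is an `A`-linear retraction of `B` onto `A = B^G`.
Being `A`-linear it maps `J·B` into `J`, so `J·B ∩ A = J`, which is injectivity. A class in
`B/(J·B)` fixed by `G` is the class of `ρ b` for any representative `b`, which is surjectivity.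
The action descends because `J·B` is generated by `G`-fixed elements, hence is `G`-stable.
-/

/-- The subring of `G`-invariant elements of `B`. -/
def fixedSubring (G B : Type*) [Group G] [CommRing B] [MulSemiringAction G B] : Subring B where
  carrier := {b | ∀ g : G, g • b = b}
  mul_mem' := by intro a b ha hb g; rw [smul_mul', ha, hb]
  one_mem' := fun g => smul_one g
  add_mem' := by intro a b ha hb g; rw [smul_add, ha, hb]
  zero_mem' := fun g => smul_zero g
  neg_mem' := by intro a ha g; rw [smul_neg, ha]

/-- The extension `J·B` to `B` of an ideal `J` of the invariant ring `A = B^G`. -/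
def extendedIdeal (G B : Type*) [Group G] [CommRing B] [MulSemiringAction G B]
    (J : Ideal (fixedSubring G B)) : Ideal B :=
  Ideal.map (fixedSubring G B).subtype J

/-- The canonical ring homomorphism `A/J → B/(J·B)`. -/
def canonicalQuotMap (G B : Type*) [Group G] [CommRing B] [MulSemiringAction G B]
    (J : Ideal (fixedSubring G B)) :
    (fixedSubring G B) ⧸ J →+* B ⧸ extendedIdeal G B J :=
  Ideal.Quotient.lift J
    ((Ideal.Quotient.mk (extendedIdeal G B J)).comp (fixedSubring G B).subtype)
    (fun a ha => by
      simp only [RingHom.comp_apply, Ideal.Quotient.eq_zero_iff_mem]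
      exact Ideal.mem_map_of_mem _ ha)

section Stability

variable {G B : Type*} [Group G] [CommRing B] [MulSemiringAction G B]

theorem smul_mem_extendedIdeal (J : Ideal (fixedSubring G B)) (g : G) {x : B}
    (hx : x ∈ extendedIdeal G B J) : g • x ∈ extendedIdeal G B J := by
  have hfix : (MulSemiringAction.toRingHom G B g).comp (fixedSubring G B).subtype =
      (fixedSubring G B).subtype :=
    RingHom.ext fun a => a.2 g
  have hle : extendedIdeal G B J ≤
      (extendedIdeal G B J).comap (MulSemiringAction.toRingHom G B g) := by
    rw [extendedIdeal, Ideal.map_le_iff_le_comap, Ideal.comap_comap, hfix]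
    exact Ideal.le_comap_map
  exact hle hx

theorem invOf_mem_fixedSubring {a : B} [Invertible a] (ha : a ∈ fixedSubring G B) :
    ⅟a ∈ fixedSubring G B := fun g =>
  (invOf_eq_right_inv <| calc
    a * g • ⅟a = g • a * g • ⅟a := by rw [ha g]
    _ = 1 := by rw [← smul_mul', mul_invOf_self, smul_one]).symm

theorem sum_smul_mem_fixedSubring [Fintype G] (b : B) : ∑ g : G, g • b ∈ fixedSubring G B :=
  fun g => by
    rw [Finset.smul_sum]
    exact Fintype.sum_equiv (Equiv.mulLeft g) _ _ fun h => (mul_smul g h b).symm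

theorem mk_smul_eq_mk_smul_of_mk_eq (J : Ideal (fixedSubring G B)) (g : G) {b b' : B}
    (h : Ideal.Quotient.mk (extendedIdeal G B J) b = Ideal.Quotient.mk (extendedIdeal G B J) b') :
    Ideal.Quotient.mk (extendedIdeal G B J) (g • b)
      = Ideal.Quotient.mk (extendedIdeal G B J) (g • b') := by
  rw [Ideal.Quotient.eq] at h ⊢
  rw [← smul_sub]
  exact smul_mem_extendedIdeal J g h

theorem canonicalQuotMap_mk (J : Ideal (fixedSubring G B)) (a : fixedSubring G B) :
    canonicalQuotMap G B J (Ideal.Quotient.mk J a) = Ideal.Quotient.mk (extendedIdeal G B J) a :=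
  Ideal.Quotient.lift_mk _ _ _

end Stability

section Reynolds

variable {G B : Type*} [Group G] [Fintype G] [CommRing B] [MulSemiringAction G B]
  [Invertible (Fintype.card G : B)]

variable (G B) in
def reynolds : B →ₗ[fixedSubring G B] fixedSubring G B where
  toFun b := ⟨⅟(Fintype.card G : B) * ∑ g : G, g • b,
    mul_mem (invOf_mem_fixedSubring (natCast_mem _ _)) (sum_smul_mem_fixedSubring b)⟩
  map_add' b b' := Subtype.ext <| by
    simp only [smul_add, Finset.sum_add_distrib, mul_add, Subring.coe_add]
  map_smul' a b := Subtype.ext <| by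
    have hsmul (g : G) : g • ((a : B) * b) = a * g • b := by rw [smul_mul', a.2 g]
    simp only [Subring.smul_def, smul_eq_mul, hsmul, ← Finset.mul_sum, RingHom.id_apply,
      Subring.coe_mul]
    ring

theorem coe_reynolds (b : B) :
    (reynolds G B b : B) = ⅟(Fintype.card G : B) * ∑ g : G, g • b := rfl

theorem reynolds_coe (a : fixedSubring G B) : reynolds G B a = a := Subtype.ext <| by
  rw [coe_reynolds, Finset.sum_congr rfl fun g _ => a.2 g, Finset.sum_const, Finset.card_univ,
    nsmul_eq_mul, invOf_mul_cancel_left]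

theorem reynolds_mem_of_mem_extendedIdeal (J : Ideal (fixedSubring G B)) {x : B}
    (hx : x ∈ extendedIdeal G B J) : reynolds G B x ∈ J := by
  have hx' : x ∈ J • (⊤ : Submodule (fixedSubring G B) B) := by
    rw [Ideal.smul_top_eq_map]; exact hx
  refine (Submodule.smul_le (P := Submodule.comap (reynolds G B) J)).mpr
    (fun a ha b _ => ?_) hx'
  rw [Submodule.mem_comap, LinearMap.map_smul, smul_eq_mul]
  exact J.mul_mem_right _ ha

theorem comap_extendedIdeal (J : Ideal (fixedSubring G B)) :
    (extendedIdeal G B J).comap (fixedSubring G B).subtype = J :=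
  le_antisymm (fun a ha => reynolds_coe a ▸ reynolds_mem_of_mem_extendedIdeal J ha)
    Ideal.le_comap_map

theorem mk_reynolds_of_forall_mk_smul {I : Ideal B} {b : B}
    (hb : ∀ g : G, Ideal.Quotient.mk I (g • b) = Ideal.Quotient.mk I b) :
    Ideal.Quotient.mk I (reynolds G B b) = Ideal.Quotient.mk I b := by
  rw [coe_reynolds, map_mul, map_sum, Finset.sum_congr rfl fun g _ => hb g, Finset.sum_const,
    Finset.card_univ, nsmul_eq_mul, ← map_natCast (Ideal.Quotient.mk I), ← mul_assoc, ← map_mul,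
    invOf_mul_self, map_one, one_mul]

end Reynolds

/-- For every ideal `J` of `A = B^G`, the action of `G` on `B` descends to an action on the
quotient ring `B/(J·B)` by ring automorphisms, and the canonical ring homomorphism
`A/J → (B/(J·B))^G` onto the invariant subring of the quotient is bijective; here the
invariants of the quotient are the residue classes fixed by the induced action. -/
theorem quotient_action_descends_and_invariants
    {G B : Type*} [Group G] [Fintype G] [CommRing B] [MulSemiringAction G B]
    (hcard : Invertible (Fintype.card G : B))
    (J : Ideal (fixedSubring G B)) :
    (∀ (g : G) (b b' : B),
        Ideal.Quotient.mk (extendedIdeal G B J) b = Ideal.Quotient.mk (extendedIdeal G B J) b' →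
        Ideal.Quotient.mk (extendedIdeal G B J) (g • b)
          = Ideal.Quotient.mk (extendedIdeal G B J) (g • b')) ∧
    Function.Injective (canonicalQuotMap G B J) ∧
    Set.range (canonicalQuotMap G B J) =
      {x : B ⧸ extendedIdeal G B J | ∀ (g : G) (b : B),
        Ideal.Quotient.mk (extendedIdeal G B J) b = x →
        Ideal.Quotient.mk (extendedIdeal G B J) (g • b) = x} := by
  let := hcard
  refine ⟨fun g _ _ => mk_smul_eq_mk_smul_of_mk_eq J g, ?_, ?_⟩
  · rw [canonicalQuotMap, Ideal.injective_lift_iff, ← RingHom.comap_ker, Ideal.mk_ker]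
    exact comap_extendedIdeal J
  · ext x
    constructor
    · rintro ⟨y, rfl⟩ g b hb
      obtain ⟨a, rfl⟩ := Ideal.Quotient.mk_surjective y
      rw [canonicalQuotMap_mk] at hb ⊢
      rw [mk_smul_eq_mk_smul_of_mk_eq J g hb, a.2 g]
    · intro hx
      obtain ⟨b, rfl⟩ := Ideal.Quotient.mk_surjective x
      exact ⟨Ideal.Quotient.mk J (reynolds G B b),
        (canonicalQuotMap_mk J _).trans (mk_reynolds_of_forall_mk_smul fun g => hx g b rfl)⟩
end

section
/- Let I be a finitely generated ideal of B such that I = (I ∩ A)·B, where A = B₀ and (I ∩ A)·B denotes the ideal of B generated by the degree-zero elements of I. Then I ∩ A is a finitely generated ideal of A. -/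
/-!
The degree-zero projection `B → B₀` is `B₀`-linear and retracts the inclusion, so `B₀ → B` is a
pure extension: every ideal `J` of `B₀` satisfies `J B ∩ B₀ = J`. Since `I = J B` is finitely
generated, it is generated by the images of finitely many elements of `J`; these span an ideal
`J' ⊆ J` with `J' B = J B`, and contracting back gives `J = J'`.
-/

open DirectSum

namespace Ideal

variable {R S : Type*} [CommRing R] [CommRing S] [Algebra R S]

theorem comap_map_eq_self_of_retraction (ρ : S →ₗ[R] R) (hρ : ∀ r, ρ (algebraMap R S r) = r)
    (J : Ideal R) : (J.map (algebraMap R S)).comap (algebraMap R S) = J := by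
  refine le_antisymm (fun r hr => ?_) le_comap_map
  have hρJ : (J.map (algebraMap R S)).restrictScalars R ≤ Submodule.comap ρ J := by
    rw [← smul_top_eq_map, Submodule.smul_le]
    intro j hj s _
    simpa using J.mul_mem_right (ρ s) hj
  simpa [hρ] using hρJ hr

theorem fg_of_fg_map_of_retraction (ρ : S →ₗ[R] R) (hρ : ∀ r, ρ (algebraMap R S r) = r)
    {J : Ideal R} (hJ : (J.map (algebraMap R S)).FG) : J.FG := by
  classical
  obtain ⟨s, hsJ, hspan⟩ := (Submodule.fg_span_iff_fg_span_finset_subset _).mp hJ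
  obtain ⟨t, htJ, rfl⟩ := Finset.subset_set_image_iff.mp hsJ
  have hmap : (span (t : Set R)).map (algebraMap R S) = J.map (algebraMap R S) := by
    rw [map_span, ← Finset.coe_image]
    exact hspan.symm
  refine ⟨t, le_antisymm (span_le.mpr htJ) ?_⟩
  calc J ≤ (J.map (algebraMap R S)).comap (algebraMap R S) := le_comap_map
    _ = span (t : Set R) := by rw [← hmap, comap_map_eq_self_of_retraction ρ hρ]

end Ideal

namespace GradedRing

variable {ι B σ : Type*} [DecidableEq ι] [AddMonoid ι] [CommRing B] [SetLike σ B]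
  [AddSubgroupClass σ B] (𝒜 : ι → σ) [GradedRing 𝒜]

def projZeroLinearMap : B →ₗ[SetLike.GradeZero.subring 𝒜] SetLike.GradeZero.subring 𝒜 where
  toFun b := ⟨decompose 𝒜 b 0, (decompose 𝒜 b 0).2⟩
  map_add' x y := by ext; simp
  map_smul' a b := by ext; exact coe_decompose_mul_of_left_mem_zero 𝒜 a.2

theorem projZeroLinearMap_algebraMap (a : SetLike.GradeZero.subring 𝒜) :
    projZeroLinearMap 𝒜 (algebraMap _ B a) = a :=
  Subtype.ext (decompose_of_mem_same 𝒜 a.2)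

end GradedRing

/-- For a `ℤ`-graded commutative ring `B` with degree-zero subring `A = B₀`: if a finitely
generated ideal `I` of `B` is generated by its degree-zero part, i.e. `I = (I ∩ A)·B`,
then `I ∩ A` is a finitely generated ideal of `A`. -/
theorem contraction_fg_of_generated_by_degree_zero
    {B : Type*} [CommRing B] (𝒜 : ℤ → AddSubgroup B) [GradedRing 𝒜]
    (I : Ideal B) (hfg : I.FG)
    (hgen : I = Ideal.map (SetLike.GradeZero.subring 𝒜).subtype
      (Ideal.comap (SetLike.GradeZero.subring 𝒜).subtype I)) :
    (Ideal.comap (SetLike.GradeZero.subring 𝒜).subtype I).FG :=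
  Ideal.fg_of_fg_map_of_retraction (GradedRing.projZeroLinearMap 𝒜)
    (GradedRing.projZeroLinearMap_algebraMap 𝒜) (hgen ▸ hfg)
end
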